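/- For nonnegative integers n, k with n + k even and k ≤ n, and every real ρ > 0, one has ∫_0^{2π} H_n(ρ cos θ) e^{-ikθ} dθ = 2π n! (-1)^{(n-k)/2} ρ^k L_{(n-k)/2}^{(k)}(ρ²) / ((n+k)/2)!; and if n + k is odd then the integral vanishes. -/

import Mathlib

/-!
Write `2ρ cos θ = ρ (e^{iθ} + e^{-iθ})`. The monomial `(2 cos θ)^m` then has Fourier coefficients
given by the binomial theorem, and orthogonality of `e^{ipθ}` on `[0, 2π]` picks out from the
explicit sum for `H_n` exactly the terms `m = n - 2r` with `m + k` even and `m ≥ k`. Reversing the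
order of the surviving sum turns it into the series of `L_N^{(k)}(ρ²)`, `N = (n - k)/2`.
-/

open Complex intervalIntegral

/-- Physicists' Hermite polynomial. -/
noncomputable def Hpoly (n : ℕ) (x : ℂ) : ℂ :=
  (Nat.factorial n) * ∑ k ∈ Finset.range (n / 2 + 1),
    (-1 : ℂ) ^ k * (2 * x) ^ (n - 2 * k) / ((Nat.factorial k) * (Nat.factorial (n - 2 * k)))

/-- Generalized Laguerre polynomial with integer parameter. -/
noncomputable def lagC (n : ℕ) (α : ℤ) (x : ℂ) : ℂ :=
  ∑ k ∈ Finset.range (n + 1),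
    (-x) ^ k / (Nat.factorial k) *
      ((∏ i ∈ Finset.Icc (k + 1) n, ((α : ℂ) + (i : ℕ))) / (Nat.factorial (n - k)))

open Finset
open scoped Real Nat

theorem integral_exp_int_mul_I (p : ℤ) :
    ∫ θ : ℝ in (0)..(2 * π), exp (I * p * θ) = if p = 0 then (2 * π : ℂ) else 0 := by
  split_ifs with hp
  · simp [hp]
  · have hpI : I * p ≠ 0 := by simp [hp]
    have hper : exp (I * p * (2 * π : ℝ)) = 1 := by
      rw [← exp_int_mul_two_pi_mul_I p]
      push_cast
      ring_nf
    rw [integral_exp_mul_complex hpI, hper]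
    simp

theorem two_cos_pow_mul_exp (m k : ℕ) (θ : ℝ) :
    (2 * (Real.cos θ : ℂ)) ^ m * exp (-I * k * θ) =
      ∑ j ∈ range (m + 1), (m.choose j : ℂ) * exp (I * ((2 * j - m - k : ℤ) : ℂ) * θ) := by
  rw [ofReal_cos, two_cos, add_pow, sum_mul]
  refine sum_congr rfl fun j hj => ?_
  have hjm : j ≤ m := Nat.lt_succ_iff.mp (mem_range.mp hj)
  rw [mul_right_comm, mul_comm, ← exp_nat_mul, ← exp_nat_mul, ← exp_add, ← exp_add]
  congr 2
  push_cast [Nat.cast_sub hjm]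
  ring

theorem sum_choose_mul_ite (m k : ℕ) (c : ℂ) :
    ∑ j ∈ range (m + 1), (m.choose j : ℂ) * (if (2 * j - m - k : ℤ) = 0 then c else 0) =
      if k ≤ m ∧ Even (m + k) then c * m.choose ((m + k) / 2) else 0 := by
  split_ifs with h
  · obtain ⟨hkm, hev⟩ := h
    rw [Nat.even_iff] at hev
    rw [sum_eq_single_of_mem ((m + k) / 2) (mem_range.mpr (by omega))]
    · rw [if_pos (by omega), mul_comm]
    · intro j _ hj
      rw [if_neg (by omega), mul_zero]
  · refine sum_eq_zero fun j hj => ?_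
    rw [mem_range] at hj
    rw [if_neg fun hj' => h ⟨by omega, Nat.even_iff.mpr (by omega)⟩, mul_zero]

theorem integral_two_cos_pow_mul_exp (m k : ℕ) :
    ∫ θ : ℝ in (0)..(2 * π), (2 * (Real.cos θ : ℂ)) ^ m * exp (-I * k * θ) =
      if k ≤ m ∧ Even (m + k) then (2 * π * m.choose ((m + k) / 2) : ℂ) else 0 := by
  simp_rw [two_cos_pow_mul_exp]
  rw [integral_finsetSum fun j _ => by apply Continuous.intervalIntegrable; fun_prop]
  simp_rw [integral_const_mul, integral_exp_int_mul_I]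
  exact sum_choose_mul_ite m k _

theorem integral_hpoly_cos_mul_exp (n k : ℕ) (ρ : ℝ) :
    ∫ θ : ℝ in (0)..(2 * π), Hpoly n (ρ * Real.cos θ) * exp (-I * k * θ) =
      n ! * ∑ r ∈ range (n / 2 + 1), (-1 : ℂ) ^ r * (ρ : ℂ) ^ (n - 2 * r) / (r ! * (n - 2 * r)!) *
        if k ≤ n - 2 * r ∧ Even (n - 2 * r + k) then
          (2 * π * (n - 2 * r).choose ((n - 2 * r + k) / 2) : ℂ) else 0 := by
  have hexpand (θ : ℝ) : Hpoly n (ρ * Real.cos θ) * exp (-I * k * θ) =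
      n ! * ∑ r ∈ range (n / 2 + 1), (-1 : ℂ) ^ r * (ρ : ℂ) ^ (n - 2 * r) / (r ! * (n - 2 * r)!) *
        ((2 * (Real.cos θ : ℂ)) ^ (n - 2 * r) * exp (-I * k * θ)) := by
    simp only [Hpoly, mul_assoc, sum_mul]
    congr 1
    refine sum_congr rfl fun r _ => ?_
    ring
  simp_rw [hexpand, ← integral_two_cos_pow_mul_exp]
  rw [integral_const_mul,
    integral_finsetSum fun r _ => by apply Continuous.intervalIntegrable; fun_prop]
  simp_rw [integral_const_mul]

theorem prod_Icc_add_mul_factorial (k j d : ℕ) :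
    (∏ i ∈ Icc (j + 1) (j + d), (k + i)) * (k + j)! = (k + j + d)! := by
  induction d with
  | zero => simp
  | succ d ih =>
    rw [← add_assoc, prod_Icc_succ_top (by omega), mul_right_comm, ih, ← add_assoc _ d,
      Nat.factorial_succ]
    ring

theorem lagC_natCast (N k : ℕ) (x : ℂ) :
    lagC N k x = ∑ j ∈ range (N + 1), (-1) ^ j * ((N + k).choose (N - j) : ℂ) * x ^ j / j ! := by
  refine sum_congr rfl fun j hj => ?_
  obtain ⟨d, rfl⟩ : ∃ d, N = j + d := ⟨N - j, by rw [mem_range] at hj; omega⟩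
  have hprod :
      (∏ i ∈ Icc (j + 1) (j + d), (((k : ℤ) : ℂ) + (i : ℕ))) = (k + j + d)! / (k + j)! := by
    rw [eq_div_iff (by exact_mod_cast (k + j).factorial_ne_zero), ← prod_Icc_add_mul_factorial]
    push_cast
    rfl
  rw [hprod, Nat.cast_choose ℂ (by omega), neg_pow, show j + d - j = d by omega,
    show j + d + k - d = k + j by omega, show k + j + d = j + d + k by ring]
  field_simp

theorem neg_one_pow_mul_pow_mul_lagC_sq (N k : ℕ) (x : ℂ) :
    (-1) ^ N * x ^ k * lagC N k (x ^ 2) / (k + N)! =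
      ∑ r ∈ range (N + 1),
        (-1) ^ r * x ^ (k + 2 * (N - r)) / (r ! * (N - r)! * (k + (N - r))!) := by
  rw [lagC_natCast, mul_sum, sum_div]
  conv_rhs => rw [← sum_range_reflect]
  refine sum_congr rfl fun j hj => ?_
  obtain ⟨d, rfl⟩ : ∃ d, N = j + d := ⟨N - j, by rw [mem_range] at hj; omega⟩
  rw [Nat.cast_choose ℂ (by omega), show j + d + 1 - 1 - j = d by omega,
    show j + d - d = j by omega, show j + d - j = d by omega,
    show j + d + k - d = k + j by omega, show j + d + k = k + (j + d) by ring]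
  have hsq : ((-1 : ℂ) ^ j) ^ 2 = 1 := by rw [← pow_mul, pow_mul', neg_one_sq, one_pow]
  have hfac := (k + (j + d)).factorial_ne_zero
  field_simp
  linear_combination (-1) ^ d * x ^ (k + 2 * j) / (d ! * (k + j)! * j ! : ℂ) * hsq

theorem integral_hpoly_cos_mul_exp_of_odd (n k : ℕ) (ρ : ℝ) (h : ¬Even (n + k)) :
    ∫ θ : ℝ in (0)..(2 * π), Hpoly n (ρ * Real.cos θ) * exp (-I * k * θ) = 0 := by
  rw [integral_hpoly_cos_mul_exp]
  refine mul_eq_zero_of_right _ (sum_eq_zero fun r hr => ?_)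
  rw [mem_range] at hr
  rw [if_neg fun ⟨_, hev⟩ => h (Nat.even_iff.mpr (by rw [Nat.even_iff] at hev; omega)), mul_zero]

theorem integral_hpoly_cos_mul_exp_of_even (N k : ℕ) (ρ : ℝ) :
    ∫ θ : ℝ in (0)..(2 * π), Hpoly (k + 2 * N) (ρ * Real.cos θ) * exp (-I * k * θ) =
      2 * π * (k + 2 * N)! * ∑ r ∈ range (N + 1),
        (-1) ^ r * (ρ : ℂ) ^ (k + 2 * (N - r)) / (r ! * (N - r)! * (k + (N - r))!) := by
  rw [integral_hpoly_cos_mul_exp,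
    ← sum_subset (range_subset_range.mpr (by omega : N + 1 ≤ (k + 2 * N) / 2 + 1))]
  · rw [mul_sum, mul_sum]
    refine sum_congr rfl fun r hr => ?_
    obtain ⟨d, rfl⟩ : ∃ d, N = r + d := ⟨N - r, by rw [mem_range] at hr; omega⟩
    rw [if_pos ⟨by omega, Nat.even_iff.mpr (by omega)⟩,
      show k + 2 * (r + d) - 2 * r = k + 2 * d by omega,
      show (k + 2 * d + k) / 2 = k + d by omega, show r + d - r = d by omega,
      Nat.cast_choose ℂ (by omega), show k + 2 * d - (k + d) = d by omega]
    have hfac := (k + 2 * d).factorial_ne_zero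
    field_simp
  · intro r hr hrN
    rw [mem_range] at hr hrN
    rw [if_neg fun ⟨hkr, _⟩ => by omega, mul_zero]

theorem hermite_fourier_integral_general (n k : ℕ) (ρ : ℝ) :
    (Even (n + k) → k ≤ n →
      (∫ θ : ℝ in (0)..(2 * Real.pi),
          Hpoly n ((ρ : ℂ) * Real.cos θ) * Complex.exp (-Complex.I * k * θ)) =
        2 * Real.pi * (Nat.factorial n) * (-1 : ℂ) ^ ((n - k) / 2) * (ρ : ℂ) ^ k *
          lagC ((n - k) / 2) (k : ℤ) ((ρ : ℂ) ^ 2) / (Nat.factorial ((n + k) / 2))) ∧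
    (¬ Even (n + k) →
      (∫ θ : ℝ in (0)..(2 * Real.pi),
          Hpoly n ((ρ : ℂ) * Real.cos θ) * Complex.exp (-Complex.I * k * θ)) = 0) := by
  refine ⟨fun hev hkn => ?_, integral_hpoly_cos_mul_exp_of_odd n k ρ⟩
  obtain ⟨N, rfl⟩ : ∃ N, n = k + 2 * N := ⟨(n - k) / 2, by rw [Nat.even_iff] at hev; omega⟩
  rw [integral_hpoly_cos_mul_exp_of_even, show (k + 2 * N - k) / 2 = N by omega,
    show (k + 2 * N + k) / 2 = k + N by omega, ← neg_one_pow_mul_pow_mul_lagC_sq]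
  ring

theorem hermite_fourier_integral (n k : ℕ) (ρ : ℝ) (hρ : 0 < ρ) :
    (Even (n + k) → k ≤ n →
      (∫ θ : ℝ in (0)..(2 * Real.pi),
          Hpoly n ((ρ : ℂ) * Real.cos θ) * Complex.exp (-Complex.I * k * θ)) =
        2 * Real.pi * (Nat.factorial n) * (-1 : ℂ) ^ ((n - k) / 2) * (ρ : ℂ) ^ k *
          lagC ((n - k) / 2) (k : ℤ) ((ρ : ℂ) ^ 2) / (Nat.factorial ((n + k) / 2))) ∧
    (¬ Even (n + k) →
      (∫ θ : ℝ in (0)..(2 * Real.pi),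
          Hpoly n ((ρ : ℂ) * Real.cos θ) * Complex.exp (-Complex.I * k * θ)) = 0) :=
  hermite_fourier_integral_general n k ρ
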